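/- Diagonal case of the separation identity: for distinct λ_1, ..., λ_g and 1 ≤ n ≤ g, the total derivative satisfies d/dλ_k [β_n'(λ_k)/β'(λ_k)] = (1/2) β_n''(λ_k)/β'(λ_k) - (1/2) β_n'(λ_k) β''(λ_k)/β'(λ_k)², where β(λ) = ∏_{l=1}^g (λ - λ_l), β_n(λ) is its degree-n truncation, and the total derivative in λ_k accounts for both the dependence of the coefficients β_1,...,β_n on λ_k and the evaluation point λ = λ_k. -/

import Mathlib

/-- `β(λ) = ∏_{l} (λ - λ_l)` with the roots `λ_l` indeterminates. -/
noncomputable def betaP (F : Type*) [Field F] (g : ℕ) :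
    Polynomial (MvPolynomial (Fin g) F) :=
  ∏ l : Fin g, (Polynomial.X - Polynomial.C (MvPolynomial.X l))

/-- The truncation `β_n(λ) = λ^n + β_1 λ^{n-1} + ⋯ + β_n`. -/
noncomputable def betaTrunc (F : Type*) [Field F] (g n : ℕ) :
    Polynomial (MvPolynomial (Fin g) F) :=
  ∑ m ∈ Finset.range (n + 1),
    Polynomial.C ((betaP F g).coeff (g - m)) * Polynomial.X ^ (n - m)

/-- The canonical map into the field of rational functions of the roots. -/
noncomputable def toFrac (F : Type*) [Field F] (g : ℕ) :
    MvPolynomial (Fin g) F →+* FractionRing (MvPolynomial (Fin g) F) :=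
  algebraMap (MvPolynomial (Fin g) F) (FractionRing (MvPolynomial (Fin g) F))

/-!
Write `β_n(λ) = (λ - λ_k) T(λ) + c` where no coefficient of `T` involves `λ_k`: for `n < g`,
`T` is the degree-`(n-1)` truncation of `β(λ) / (λ - λ_k)`, and for `n = g` it is that whole
quotient. Then `β_n'(λ_k) = T(λ_k)` and `β_n''(λ_k) = 2 T'(λ_k)`, while the total
`λ_k`-derivative of `T(λ_k)` only sees the evaluation point and equals `T'(λ_k)`. Hence
`2 d/dλ_k [β_n'(λ_k)] = β_n''(λ_k)`, in particular for `β = β_g`, and the quotient rule gives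
the identity.
-/

open Polynomial

namespace Derivation

variable {A R : Type*} [CommSemiring A] [CommRing R] [Algebra A R] (D : Derivation A R R)

theorem apply_coeff_mul_eq_zero {p q : R[X]} (hp : ∀ i, D (p.coeff i) = 0)
    (hq : ∀ i, D (q.coeff i) = 0) (i : ℕ) : D ((p * q).coeff i) = 0 := by
  rw [coeff_mul, map_sum]
  exact Finset.sum_eq_zero fun x _ => by simp [Derivation.leibniz, hp, hq]

theorem apply_coeff_prod_eq_zero {ι : Type*} (s : Finset ι) (f : ι → R[X])
    (hf : ∀ j ∈ s, ∀ i, D ((f j).coeff i) = 0) (i : ℕ) : D ((∏ j ∈ s, f j).coeff i) = 0 :=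
  Finset.prod_induction f (fun p => ∀ i, D (p.coeff i) = 0)
    (fun _ _ => D.apply_coeff_mul_eq_zero) (fun i => by simp [coeff_one, apply_ite]) hf i

theorem apply_eval_eq_of_apply_coeff_eq_zero {T : R[X]} (hT : ∀ i, D (T.coeff i) = 0) (x : R) :
    D (T.eval x) = (derivative T).eval x * D x := by
  rw [eval_eq_sum, derivative_eval, Polynomial.sum, Polynomial.sum, map_sum, Finset.sum_mul]
  refine Finset.sum_congr rfl fun i _ => ?_
  rw [Derivation.leibniz, hT, Derivation.leibniz_pow]
  simp only [smul_eq_mul, nsmul_eq_mul]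
  ring

theorem two_mul_apply_eval_derivative {x : R} (hx : D x = 1) {P T : R[X]} {c : R}
    (hP : P = (X - C x) * T + C c) (hT : ∀ i, D (T.coeff i) = 0) :
    2 * D ((derivative P).eval x) = (derivative (derivative P)).eval x := by
  have hP' : (derivative P).eval x = T.eval x := by simp [hP, derivative_mul]
  have hP'' : (derivative (derivative P)).eval x = 2 * (derivative T).eval x := by
    simp [hP, derivative_mul]
    ring
  rw [hP', hP'', D.apply_eval_eq_of_apply_coeff_eq_zero hT, hx, mul_one]

end Derivation

section Beta

variable {F : Type*} [Field F] {g : ℕ}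

noncomputable def betaCofactor (k : Fin g) : Polynomial (MvPolynomial (Fin g) F) :=
  ∏ l ∈ Finset.univ.erase k, (X - C (MvPolynomial.X l))

variable (k : Fin g)

theorem betaP_eq_mul_betaCofactor :
    betaP F g = (X - C (MvPolynomial.X k)) * betaCofactor k :=
  (Finset.mul_prod_erase _ _ (Finset.mem_univ k)).symm

theorem pderiv_betaCofactor_coeff (i : ℕ) :
    MvPolynomial.pderiv k ((betaCofactor (F := F) k).coeff i) = 0 := by
  refine Derivation.apply_coeff_prod_eq_zero _ _ _ (fun l hl i => ?_) i
  have hlk : l ≠ k := Finset.ne_of_mem_erase hl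
  rcases i with _ | _ | i <;> simp [coeff_X, coeff_C, MvPolynomial.pderiv_X_of_ne hlk]

theorem betaP_coeff_succ (j : ℕ) :
    (betaP F g).coeff (j + 1) =
      (betaCofactor k).coeff j - MvPolynomial.X k * (betaCofactor k).coeff (j + 1) := by
  rw [betaP_eq_mul_betaCofactor k, sub_mul, coeff_sub, coeff_X_mul, coeff_C_mul]

theorem natDegree_betaP : (betaP F g).natDegree = g := by
  simp [betaP]

theorem betaP_coeff_self : (betaP F g).coeff g = 1 := by
  have hmonic : (betaP F g).Monic := monic_prod_X_sub_C _ _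
  simpa [natDegree_betaP] using hmonic.coeff_natDegree

theorem betaCofactor_coeff_pred : (betaCofactor (F := F) k).coeff (g - 1) = 1 := by
  have hmonic : (betaCofactor (F := F) k).Monic := monic_prod_X_sub_C _ _
  simpa [betaCofactor] using hmonic.coeff_natDegree

theorem betaTrunc_zero : betaTrunc F g 0 = 1 := by
  simp [betaTrunc, betaP_coeff_self]

theorem betaTrunc_succ (n : ℕ) :
    betaTrunc F g (n + 1) = X * betaTrunc F g n + C ((betaP F g).coeff (g - (n + 1))) := by
  rw [betaTrunc, betaTrunc, Finset.sum_range_succ, Finset.mul_sum, Nat.sub_self, pow_zero,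
    mul_one]
  refine congrArg (· + _) (Finset.sum_congr rfl fun m hm => ?_)
  rw [Nat.sub_add_comm (Finset.mem_range_succ_iff.mp hm), pow_succ]
  ring

theorem betaTrunc_self : betaTrunc F g g = betaP F g := by
  conv_rhs => rw [(betaP F g).as_sum_range' (g + 1) (by rw [natDegree_betaP]; omega)]
  rw [betaTrunc, ← Finset.sum_range_reflect]
  refine Finset.sum_congr rfl fun m hm => ?_
  have := Finset.mem_range.mp hm
  rw [show g - (g + 1 - 1 - m) = m by omega, C_mul_X_pow_eq_monomial]

-- For `n = g` the index `g - 1 - n` would truncate to `0`; there the constant term is `0`.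
theorem betaTrunc_eq_of_lt {n : ℕ} (hn : n < g) :
    ∃ T : Polynomial (MvPolynomial (Fin g) F), (∀ i, MvPolynomial.pderiv k (T.coeff i) = 0) ∧
      betaTrunc F g n =
        (X - C (MvPolynomial.X k)) * T + C ((betaCofactor k).coeff (g - 1 - n)) := by
  induction n with
  | zero => exact ⟨0, by simp, by simp [betaTrunc_zero, betaCofactor_coeff_pred]⟩
  | succ n ih =>
    obtain ⟨T, hT, hTrunc⟩ := ih (by omega)
    refine ⟨X * T + C ((betaCofactor k).coeff (g - 1 - n)), fun i => ?_, ?_⟩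
    · rcases i with _ | i
      · simp [pderiv_betaCofactor_coeff]
      · simp [coeff_X_mul, hT i]
    · rw [betaTrunc_succ, hTrunc, show g - (n + 1) = (g - 1 - (n + 1)) + 1 by omega,
        betaP_coeff_succ k, show g - 1 - (n + 1) + 1 = g - 1 - n by omega]
      simp only [map_sub, map_mul]
      ring

theorem exists_betaTrunc_eq {n : ℕ} (hn : n ≤ g) :
    ∃ (T : Polynomial (MvPolynomial (Fin g) F)) (c : MvPolynomial (Fin g) F),
      (∀ i, MvPolynomial.pderiv k (T.coeff i) = 0) ∧
        betaTrunc F g n = (X - C (MvPolynomial.X k)) * T + C c := by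
  rcases hn.lt_or_eq with hn | rfl
  · obtain ⟨T, hT, hTrunc⟩ := betaTrunc_eq_of_lt (F := F) k hn
    exact ⟨T, _, hT, hTrunc⟩
  · exact ⟨betaCofactor k, 0, pderiv_betaCofactor_coeff k, by
      rw [betaTrunc_self, betaP_eq_mul_betaCofactor k, map_zero, add_zero]⟩

theorem two_mul_pderiv_eval_derivative_betaTrunc {n : ℕ} (hn : n ≤ g) :
    2 * MvPolynomial.pderiv k ((derivative (betaTrunc F g n)).eval (MvPolynomial.X k)) =
      (derivative (derivative (betaTrunc F g n))).eval (MvPolynomial.X k) := by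
  obtain ⟨T, c, hT, hTrunc⟩ := exists_betaTrunc_eq (F := F) k hn
  exact (MvPolynomial.pderiv k).two_mul_apply_eval_derivative (R := MvPolynomial (Fin g) F)
    (MvPolynomial.pderiv_X_self k) hTrunc hT

end Beta

theorem separation_identity_diag_general (F : Type*) [Field F] [CharZero F] (g n : ℕ)
    (hng : n ≤ g) (k : Fin g) :
    (toFrac F g (MvPolynomial.pderiv k
          ((Polynomial.derivative (betaTrunc F g n)).eval (MvPolynomial.X k))) *
        toFrac F g ((Polynomial.derivative (betaP F g)).eval (MvPolynomial.X k)) -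
      toFrac F g ((Polynomial.derivative (betaTrunc F g n)).eval (MvPolynomial.X k)) *
        toFrac F g (MvPolynomial.pderiv k
          ((Polynomial.derivative (betaP F g)).eval (MvPolynomial.X k)))) /
      (toFrac F g ((Polynomial.derivative (betaP F g)).eval (MvPolynomial.X k))) ^ 2 =
    (2 : FractionRing (MvPolynomial (Fin g) F))⁻¹ *
        toFrac F g ((Polynomial.derivative (Polynomial.derivative (betaTrunc F g n))).eval
          (MvPolynomial.X k)) /
        toFrac F g ((Polynomial.derivative (betaP F g)).eval (MvPolynomial.X k)) -
      (2 : FractionRing (MvPolynomial (Fin g) F))⁻¹ *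
        toFrac F g ((Polynomial.derivative (betaTrunc F g n)).eval (MvPolynomial.X k)) *
        toFrac F g ((Polynomial.derivative (Polynomial.derivative (betaP F g))).eval
          (MvPolynomial.X k)) /
        (toFrac F g ((Polynomial.derivative (betaP F g)).eval (MvPolynomial.X k))) ^ 2 := by
  have hβn := congrArg (toFrac F g) (two_mul_pderiv_eval_derivative_betaTrunc k hng)
  have hβ := congrArg (toFrac F g) (two_mul_pderiv_eval_derivative_betaTrunc (F := F) k le_rfl)
  rw [betaTrunc_self] at hβ
  rw [map_mul, map_ofNat] at hβ hβn
  set d := toFrac F g ((derivative (betaP F g)).eval (MvPolynomial.X k))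
  set e := toFrac F g ((derivative (betaTrunc F g n)).eval (MvPolynomial.X k))
  rcases eq_or_ne d 0 with hd | hd
  · simp [hd]
  · field_simp
    linear_combination d * hβn - e * hβ

/-- the diagonal case of the separation identity: for `1 ≤ n ≤ g`,
`d/dλ_k [β_n'(λ_k)/β'(λ_k)] = (1/2) β_n''(λ_k)/β'(λ_k) - (1/2) β_n'(λ_k) β''(λ_k)/β'(λ_k)²`,
the total derivative on the left written via the quotient rule (the total `∂/∂λ_k`,
through both coefficients and evaluation point, is `MvPolynomial.pderiv k` applied
to the evaluated expressions). -/
theorem separation_identity_diag (F : Type*) [Field F] [CharZero F] (g n : ℕ)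
    (hn1 : 1 ≤ n) (hng : n ≤ g) (k : Fin g) :
    (toFrac F g (MvPolynomial.pderiv k
          ((Polynomial.derivative (betaTrunc F g n)).eval (MvPolynomial.X k))) *
        toFrac F g ((Polynomial.derivative (betaP F g)).eval (MvPolynomial.X k)) -
      toFrac F g ((Polynomial.derivative (betaTrunc F g n)).eval (MvPolynomial.X k)) *
        toFrac F g (MvPolynomial.pderiv k
          ((Polynomial.derivative (betaP F g)).eval (MvPolynomial.X k)))) /
      (toFrac F g ((Polynomial.derivative (betaP F g)).eval (MvPolynomial.X k))) ^ 2 =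
    (2 : FractionRing (MvPolynomial (Fin g) F))⁻¹ *
        toFrac F g ((Polynomial.derivative (Polynomial.derivative (betaTrunc F g n))).eval
          (MvPolynomial.X k)) /
        toFrac F g ((Polynomial.derivative (betaP F g)).eval (MvPolynomial.X k)) -
      (2 : FractionRing (MvPolynomial (Fin g) F))⁻¹ *
        toFrac F g ((Polynomial.derivative (betaTrunc F g n)).eval (MvPolynomial.X k)) *
        toFrac F g ((Polynomial.derivative (Polynomial.derivative (betaP F g))).eval
          (MvPolynomial.X k)) /
        (toFrac F g ((Polynomial.derivative (betaP F g)).eval (MvPolynomial.X k))) ^ 2 :=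
  separation_identity_diag_general F g n hng k
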